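/- arXiv:1907.04019 — 5 statements merged into one kernel-verified Lean document; each statement's English description precedes it below -/
import Mathlib

section
/- Fix an integer n ≥ 3 and r₀ > 0. Let û, v̂, ŵ be C² functions on (r₀,∞) such that û(r), v̂(r), ŵ(r) are O(r^{−n}), their first derivatives are O(r^{−n−1}), and their second derivatives are O(r^{−n−2}) as r → ∞. Then, as r → ∞, R[u_{HM,r₀}+û, v_{HM,r₀}+v̂, w_{HM,r₀}+ŵ](r) = −n(n−1) + 2 r^{1−n} d/dr[ (n−1) rⁿ û(r) − r^{n+1} v̂′(r) − (n−2) r^{n+1} ŵ′(r) ] + O(r^{−2n}). -/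
/-!
For `r > r₀` the Horowitz–Myers profile is `(-½ log V, ½ log V, log r)` with
`V = r² (1 - (r₀/r)ⁿ)`, i.e. the metric `dr²/V + V dθ² + r² dx²`. For this form of the profile
`R = e^{-2û} (K + (V/r²) · A + (V'/r) · B + (V/r²) · Q)`, where `A, B` are linear and `Q` is
quadratic in `r û', r v̂', r ŵ', r² v̂'', r² ŵ''`, and `K = -V'' - 2(n-2) V'/r - (n-2)(n-3) V/r²`
equals `-n(n-1)` because HM has constant scalar curvature. Replacing `V/r²` and `V'/r` by their
limits `1` and `2` turns `A + 2B` into `2 r^{1-n} F' - 2n(n-1) û`, where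
`F = (n-1) rⁿ û - r^{n+1} v̂' - (n-2) r^{n+1} ŵ'` and `-2n(n-1) û` is cancelled by the linear term
of `-n(n-1) e^{-2û}`. Every term left over is a product of
two quantities of size `O(r^{-n})`.
-/

open Filter

/-- The scalar curvature `R[u,v,w]` of the diagonal metric
`e^{2u} dr² + e^{2v} dθ² + e^{2w}((dx³)² + ⋯ + (dxⁿ)²)`. -/
noncomputable def Rop (n : ℕ) (u v w : ℝ → ℝ) (r : ℝ) : ℝ :=
  2 * Real.exp (-2 * u r) *
    (-(deriv (deriv v) r) - ((n : ℝ) - 2) * deriv (deriv w) r +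
      deriv u r * deriv v r + ((n : ℝ) - 2) * deriv u r * deriv w r -
      ((n : ℝ) - 2) * deriv v r * deriv w r - (deriv v r) ^ 2 -
      ((n : ℝ) - 1) * ((n : ℝ) - 2) / 2 * (deriv w r) ^ 2)

/-- The Horowitz–Myers profile function `u_{HM,r₀}` (with `ℓ = 1`). -/
noncomputable def uHM (n : ℕ) (r₀ r : ℝ) : ℝ :=
  -Real.log r - (1 / 2) * Real.log (1 - (r₀ / r) ^ n)

/-- The Horowitz–Myers profile function `v_{HM,r₀}` (with `ℓ = 1`). -/
noncomputable def vHM (n : ℕ) (r₀ r : ℝ) : ℝ :=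
  Real.log r + (1 / 2) * Real.log (1 - (r₀ / r) ^ n)

/-- The Horowitz–Myers profile function `w_{HM}` (with `ℓ = 1`). -/
noncomputable def wHM (r : ℝ) : ℝ := Real.log r

open Real Topology Asymptotics

/- The terms `A`, `B`, `Q` of the header, in the variables
`x, y, z, y₂, z₂ = r û', r v̂', r ŵ', r² v̂'', r² ŵ''`. -/

noncomputable def RopLinA (n : ℕ) (x y z y₂ z₂ : ℝ) : ℝ :=
  -2 * y₂ - 2 * ((n : ℝ) - 2) * z₂ + 2 * ((n : ℝ) - 2) * (x - y) -
    2 * ((n : ℝ) - 1) * ((n : ℝ) - 2) * z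

noncomputable def RopLinB (n : ℕ) (x y z : ℝ) : ℝ :=
  x - 3 * y - 2 * ((n : ℝ) - 2) * z

noncomputable def RopQuad (n : ℕ) (x y z : ℝ) : ℝ :=
  2 * (x * y + ((n : ℝ) - 2) * x * z - ((n : ℝ) - 2) * y * z - y ^ 2 -
    ((n : ℝ) - 1) * ((n : ℝ) - 2) / 2 * z ^ 2)

theorem Rop_congr {n : ℕ} {u₁ u₂ v₁ v₂ w₁ w₂ : ℝ → ℝ} {r : ℝ} (hu : u₁ =ᶠ[𝓝 r] u₂)
    (hv : v₁ =ᶠ[𝓝 r] v₂) (hw : w₁ =ᶠ[𝓝 r] w₂) :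
    Rop n u₁ v₁ w₁ r = Rop n u₂ v₂ w₂ r := by
  simp only [Rop, hu.eq_of_nhds, hu.deriv_eq, hv.deriv_eq, hv.deriv.deriv_eq, hw.deriv_eq,
    hw.deriv.deriv_eq]

theorem Rop_logV_add_eq (n : ℕ) {V V₁ uh vh wh : ℝ → ℝ} {V₂ r : ℝ} (hr : 0 < r)
    (hV : ∀ᶠ s in 𝓝 r, HasDerivAt V (V₁ s) s) (hV₁ : HasDerivAt V₁ V₂ r) (hV0 : 0 < V r)
    (huh : DifferentiableAt ℝ uh r) (hvh : ∀ᶠ s in 𝓝 r, DifferentiableAt ℝ vh s)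
    (hvh' : DifferentiableAt ℝ (deriv vh) r) (hwh : ∀ᶠ s in 𝓝 r, DifferentiableAt ℝ wh s)
    (hwh' : DifferentiableAt ℝ (deriv wh) r) :
    Rop n (fun s => -(1 / 2) * log (V s) + uh s) (fun s => 1 / 2 * log (V s) + vh s)
        (fun s => log s + wh s) r =
      exp (-2 * uh r) *
        (-(V₂ + 2 * ((n : ℝ) - 2) * (V₁ r / r) + ((n : ℝ) - 2) * ((n : ℝ) - 3) * (V r / r ^ 2)) +
          V r / r ^ 2 *
            (RopLinA n (r * deriv uh r) (r * deriv vh r) (r * deriv wh r)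
                (r ^ 2 * deriv (deriv vh) r) (r ^ 2 * deriv (deriv wh) r) +
              RopQuad n (r * deriv uh r) (r * deriv vh r) (r * deriv wh r)) +
          V₁ r / r * RopLinB n (r * deriv uh r) (r * deriv vh r) (r * deriv wh r)) := by
  have hVne : ∀ᶠ s in 𝓝 r, V s ≠ 0 := hV.self_of_nhds.continuousAt.eventually_ne hV0.ne'
  have du : deriv (fun s => -(1 / 2) * log (V s) + uh s) r =
      -(1 / 2) * (V₁ r / V r) + deriv uh r :=
    (((hV.self_of_nhds.log hV0.ne').const_mul _).add huh.hasDerivAt).deriv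
  have dv : deriv (fun s => 1 / 2 * log (V s) + vh s) =ᶠ[𝓝 r]
      fun s => 1 / 2 * (V₁ s / V s) + deriv vh s := by
    filter_upwards [hV, hVne, hvh] with s hVs hVs0 hvs
    exact (((hVs.log hVs0).const_mul _).add hvs.hasDerivAt).deriv
  have dw : deriv (fun s => log s + wh s) =ᶠ[𝓝 r] fun s => s⁻¹ + deriv wh s := by
    filter_upwards [eventually_ne_nhds hr.ne', hwh] with s hs hws
    exact ((hasDerivAt_log hs).add hws.hasDerivAt).deriv
  have dv' : deriv (deriv (fun s => 1 / 2 * log (V s) + vh s)) r =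
      1 / 2 * ((V₂ * V r - V₁ r * V₁ r) / V r ^ 2) + deriv (deriv vh) r := by
    rw [dv.deriv_eq]
    exact (((hV₁.div hV.self_of_nhds hV0.ne').const_mul _).add hvh'.hasDerivAt).deriv
  have dw' : deriv (deriv (fun s => log s + wh s)) r = -(r ^ 2)⁻¹ + deriv (deriv wh) r := by
    rw [dw.deriv_eq]
    exact ((hasDerivAt_inv hr.ne').add hwh'.hasDerivAt).deriv
  have hexp : exp (-2 * (-(1 / 2) * log (V r) + uh r)) = V r * exp (-2 * uh r) := by
    rw [show -2 * (-(1 / 2) * log (V r) + uh r) = log (V r) + -2 * uh r by ring, exp_add,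
      exp_log hV0]
  simp only [Rop, du, dw.eq_of_nhds, dv.eq_of_nhds, dv', dw', hexp, RopLinA, RopLinB, RopQuad]
  field_simp
  ring

noncomputable def hmV (n : ℕ) (r₀ r : ℝ) : ℝ := r ^ 2 * (1 - (r₀ / r) ^ n)

theorem hasDerivAt_div_pow (n : ℕ) (r₀ : ℝ) {r : ℝ} (hr : r ≠ 0) :
    HasDerivAt (fun s => (r₀ / s) ^ n) (-((n : ℝ) * (r₀ / r) ^ n / r)) r := by
  refine ((hasDerivAt_inv hr).const_mul r₀).pow n |>.congr_deriv ?_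
  rcases n with _ | m
  · simp
  · simp only [Nat.add_sub_cancel, mul_pow, div_pow, inv_pow]
    field_simp
    ring

theorem hasDerivAt_hmV (n : ℕ) (r₀ : ℝ) {r : ℝ} (hr : r ≠ 0) :
    HasDerivAt (hmV n r₀) (r * (2 + ((n : ℝ) - 2) * (r₀ / r) ^ n)) r := by
  refine ((hasDerivAt_pow 2 r).mul ((hasDerivAt_div_pow n r₀ hr).const_sub 1)).congr_deriv ?_
  field_simp
  ring

theorem hasDerivAt_deriv_hmV (n : ℕ) (r₀ : ℝ) {r : ℝ} (hr : r ≠ 0) :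
    HasDerivAt (fun s => s * (2 + ((n : ℝ) - 2) * (r₀ / s) ^ n))
      (2 - ((n : ℝ) - 1) * ((n : ℝ) - 2) * (r₀ / r) ^ n) r := by
  refine ((hasDerivAt_id r).mul (((hasDerivAt_div_pow n r₀ hr).const_mul _).const_add 2))
    |>.congr_deriv ?_
  simp only [id]
  field_simp
  ring

theorem one_sub_div_pow_pos {n : ℕ} (hn : n ≠ 0) {r₀ r : ℝ} (hr₀ : 0 ≤ r₀) (hr : r₀ < r) :
    0 < 1 - (r₀ / r) ^ n := by
  have hq : (r₀ / r) ^ n < 1 :=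
    pow_lt_one₀ (div_nonneg hr₀ (hr₀.trans hr.le)) ((div_lt_one (hr₀.trans_lt hr)).2 hr) hn
  linarith

theorem log_hmV {n : ℕ} (hn : n ≠ 0) {r₀ r : ℝ} (hr₀ : 0 ≤ r₀) (hr : r₀ < r) :
    log (hmV n r₀ r) = 2 * log r + log (1 - (r₀ / r) ^ n) := by
  rw [hmV, log_mul (by positivity [hr₀.trans_lt hr]) (one_sub_div_pow_pos hn hr₀ hr).ne', log_pow]
  norm_num

theorem uHM_eventuallyEq {n : ℕ} (hn : n ≠ 0) {r₀ r : ℝ} (hr₀ : 0 ≤ r₀) (hr : r₀ < r) :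
    uHM n r₀ =ᶠ[𝓝 r] fun s => -(1 / 2) * log (hmV n r₀ s) := by
  filter_upwards [eventually_gt_nhds hr] with s hs
  rw [uHM, log_hmV hn hr₀ hs]
  ring

theorem vHM_eventuallyEq {n : ℕ} (hn : n ≠ 0) {r₀ r : ℝ} (hr₀ : 0 ≤ r₀) (hr : r₀ < r) :
    vHM n r₀ =ᶠ[𝓝 r] fun s => 1 / 2 * log (hmV n r₀ s) := by
  filter_upwards [eventually_gt_nhds hr] with s hs
  rw [vHM, log_hmV hn hr₀ hs]
  ring

theorem Rop_HM_add_eq {n : ℕ} (hn : n ≠ 0) {r₀ r : ℝ} (hr₀ : 0 ≤ r₀) (hr : r₀ < r)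
    {uh vh wh : ℝ → ℝ}
    (huh : DifferentiableAt ℝ uh r) (hvh : ∀ᶠ s in 𝓝 r, DifferentiableAt ℝ vh s)
    (hvh' : DifferentiableAt ℝ (deriv vh) r) (hwh : ∀ᶠ s in 𝓝 r, DifferentiableAt ℝ wh s)
    (hwh' : DifferentiableAt ℝ (deriv wh) r) :
    Rop n (fun s => uHM n r₀ s + uh s) (fun s => vHM n r₀ s + vh s) (fun s => wHM s + wh s) r =
      exp (-2 * uh r) *
        (-((n : ℝ) * ((n : ℝ) - 1)) +
          (1 - (r₀ / r) ^ n) *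
            (RopLinA n (r * deriv uh r) (r * deriv vh r) (r * deriv wh r)
                (r ^ 2 * deriv (deriv vh) r) (r ^ 2 * deriv (deriv wh) r) +
              RopQuad n (r * deriv uh r) (r * deriv vh r) (r * deriv wh r)) +
          (2 + ((n : ℝ) - 2) * (r₀ / r) ^ n) *
            RopLinB n (r * deriv uh r) (r * deriv vh r) (r * deriv wh r)) := by
  have hr0 : 0 < r := hr₀.trans_lt hr
  have hV : ∀ᶠ s in 𝓝 r, HasDerivAt (hmV n r₀) (s * (2 + ((n : ℝ) - 2) * (r₀ / s) ^ n)) s := by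
    filter_upwards [eventually_ne_nhds hr0.ne'] with s hs using hasDerivAt_hmV n r₀ hs
  have hV0 : 0 < hmV n r₀ r := mul_pos (by positivity) (one_sub_div_pow_pos hn hr₀ hr)
  simp only [wHM]
  rw [Rop_congr ((uHM_eventuallyEq hn hr₀ hr).fun_add EventuallyEq.rfl)
      ((vHM_eventuallyEq hn hr₀ hr).fun_add EventuallyEq.rfl) EventuallyEq.rfl,
    Rop_logV_add_eq n hr0 hV (hasDerivAt_deriv_hmV n r₀ hr0.ne') hV0 huh hvh hvh' hwh hwh']
  simp only [hmV]
  field_simp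
  ring

theorem two_rpow_mul_deriv_flux_eq (n : ℕ) {uh vh wh : ℝ → ℝ} {r : ℝ} (hr : 0 < r)
    (huh : DifferentiableAt ℝ uh r) (hvh' : DifferentiableAt ℝ (deriv vh) r)
    (hwh' : DifferentiableAt ℝ (deriv wh) r) :
    2 * r ^ (1 - (n : ℝ)) *
        deriv (fun s => ((n : ℝ) - 1) * s ^ n * uh s - s ^ (n + 1) * deriv vh s -
          ((n : ℝ) - 2) * s ^ (n + 1) * deriv wh s) r =
      2 * (n : ℝ) * ((n : ℝ) - 1) * uh r +
        RopLinA n (r * deriv uh r) (r * deriv vh r) (r * deriv wh r)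
          (r ^ 2 * deriv (deriv vh) r) (r ^ 2 * deriv (deriv wh) r) +
        2 * RopLinB n (r * deriv uh r) (r * deriv vh r) (r * deriv wh r) := by
  have h : HasDerivAt (fun s => ((n : ℝ) - 1) * s ^ n * uh s - s ^ (n + 1) * deriv vh s -
      ((n : ℝ) - 2) * s ^ (n + 1) * deriv wh s) _ r :=
    ((((hasDerivAt_pow n r).const_mul ((n : ℝ) - 1)).mul huh.hasDerivAt).sub
      ((hasDerivAt_pow (n + 1) r).mul hvh'.hasDerivAt)).sub
      (((hasDerivAt_pow (n + 1) r).const_mul ((n : ℝ) - 2)).mul hwh'.hasDerivAt)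
  have hpow : (n : ℝ) * r ^ (n - 1) = n * r ^ n / r := by
    rcases eq_or_ne n 0 with rfl | hn
    · simp
    · rw [← pow_sub_one_mul hn r]
      field_simp
  rw [h.deriv, hpow, rpow_sub hr, rpow_one, rpow_natCast]
  simp only [RopLinA, RopLinB, Nat.add_sub_cancel]
  push_cast
  field_simp
  ring

section ContDiffTwo

variable {𝕜 F : Type*} [NontriviallyNormedField 𝕜] [NormedAddCommGroup F] [NormedSpace 𝕜 F]
  {f : 𝕜 → F} {s : Set 𝕜} {x : 𝕜}

theorem ContDiffOn.eventually_differentiableAt (hf : ContDiffOn 𝕜 2 f s) (hs : IsOpen s)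
    (hx : x ∈ s) : ∀ᶠ y in 𝓝 x, DifferentiableAt 𝕜 f y := by
  filter_upwards [hs.mem_nhds hx] with y hy
  exact (hf.differentiableOn (by norm_num)).differentiableAt (hs.mem_nhds hy)

theorem ContDiffOn.differentiableAt_deriv (hf : ContDiffOn 𝕜 2 f s) (hs : IsOpen s)
    (hx : x ∈ s) : DifferentiableAt 𝕜 (deriv f) x :=
  ((hf.deriv_of_isOpen hs (m := 1) (by norm_num)).differentiableOn (by norm_num)).differentiableAt
    (hs.mem_nhds hx)

end ContDiffTwo

section Asymptotics

variable {α : Type*} {l : Filter α} {f g x y z y₂ z₂ : α → ℝ}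

theorem isBigO_exp_comp_sub_one (hf : Tendsto f l (𝓝 0)) :
    (fun t => exp (f t) - 1) =O[l] f := by
  simpa [Function.comp_def] using (exp_sub_sum_range_isBigO_pow 1).comp_tendsto hf

theorem isBigO_exp_comp_sub_one_sub (hf : Tendsto f l (𝓝 0)) :
    (fun t => exp (f t) - 1 - f t) =O[l] fun t => f t ^ 2 := by
  simpa [Finset.sum_range_succ, sub_sub, Function.comp_def] using
    (exp_sub_sum_range_isBigO_pow 2).comp_tendsto hf

theorem isBigO_mul_sq (hx : x =O[l] g) (hy : y =O[l] g) :
    (fun t => x t * y t) =O[l] fun t => g t ^ 2 := by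
  simpa only [sq] using hx.mul hy

theorem isBigO_exp_mul_sub_linearization {e a b A B Q : α → ℝ} (K : ℝ)
    (hg : Tendsto g l (𝓝 0)) (he : e =O[l] g) (hA : A =O[l] g) (hB : B =O[l] g)
    (hQ : Q =O[l] fun t => g t ^ 2) (ha : (fun t => a t - 1) =O[l] g)
    (hb : (fun t => b t - 2) =O[l] g) :
    (fun t => exp (-2 * e t) * (K + a t * (A t + Q t) + b t * B t) -
        (K - 2 * K * e t + A t + 2 * B t)) =O[l] fun t => g t ^ 2 := by
  have he2 : (fun t => -2 * e t) =O[l] g := he.const_mul_left _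
  have he0 : Tendsto (fun t => -2 * e t) l (𝓝 0) := he2.trans_tendsto hg
  have hg1 : g =O[l] fun _ => (1 : ℝ) := hg.isBigO_one ℝ
  have hgg : (fun t => g t ^ 2) =O[l] g := by simpa [sq] using (isBigO_refl g l).mul hg1
  have ha1 : a =O[l] fun _ => (1 : ℝ) := by
    simpa using (ha.trans hg1).add (isBigO_refl (fun _ => (1 : ℝ)) l)
  have hb1 : b =O[l] fun _ => (1 : ℝ) := by
    simpa using (hb.trans hg1).add ((isBigO_refl (fun _ => (1 : ℝ)) l).const_mul_left 2)
  have hE1 : (fun t => exp (-2 * e t) - 1) =O[l] g := (isBigO_exp_comp_sub_one he0).trans he2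
  have hE2 : (fun t => exp (-2 * e t) - 1 - -2 * e t) =O[l] fun t => g t ^ 2 :=
    (isBigO_exp_comp_sub_one_sub he0).trans (he2.pow 2)
  have hlin : (fun t => a t * (A t + Q t) + b t * B t) =O[l] g := by
    simpa using (ha1.mul (hA.add (hQ.trans hgg))).add (hb1.mul hB)
  have hQ' : (fun t => a t * Q t) =O[l] fun t => g t ^ 2 := by simpa using ha1.mul hQ
  refine ((((hE2.const_mul_left K).add (isBigO_mul_sq hE1 hlin)).add
    ((isBigO_mul_sq ha hA).add (isBigO_mul_sq hb hB))).add hQ').congr (fun t => by ring)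
    fun t => rfl

theorem isBigO_RopLinA (n : ℕ) (hx : x =O[l] g) (hy : y =O[l] g) (hz : z =O[l] g)
    (hy₂ : y₂ =O[l] g) (hz₂ : z₂ =O[l] g) :
    (fun t => RopLinA n (x t) (y t) (z t) (y₂ t) (z₂ t)) =O[l] g :=
  (((hy₂.const_mul_left (-2)).sub (hz₂.const_mul_left _)).add
    ((hx.sub hy).const_mul_left _)).sub (hz.const_mul_left _)

theorem isBigO_RopLinB (n : ℕ) (hx : x =O[l] g) (hy : y =O[l] g) (hz : z =O[l] g) :
    (fun t => RopLinB n (x t) (y t) (z t)) =O[l] g :=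
  (hx.sub (hy.const_mul_left 3)).sub (hz.const_mul_left _)

theorem isBigO_RopQuad (n : ℕ) (hx : x =O[l] g) (hy : y =O[l] g) (hz : z =O[l] g) :
    (fun t => RopQuad n (x t) (y t) (z t)) =O[l] fun t => g t ^ 2 :=
  ((((isBigO_mul_sq hx hy).add ((isBigO_mul_sq hx hz).const_mul_left ((n : ℝ) - 2))).sub
    ((isBigO_mul_sq hy hz).const_mul_left ((n : ℝ) - 2))).sub (isBigO_mul_sq hy hy)).sub
    ((isBigO_mul_sq hz hz).const_mul_left (((n : ℝ) - 1) * ((n : ℝ) - 2) / 2))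
    |>.const_mul_left 2 |>.congr_left fun t => by simp only [RopQuad]; ring


theorem isBigO_pow_mul_of_isBigO_rpow {f : ℝ → ℝ} {a : ℝ} (k : ℕ)
    (hf : f =O[atTop] fun r => r ^ (a - k)) :
    (fun r => r ^ k * f r) =O[atTop] fun r => r ^ a := by
  refine ((isBigO_refl (fun r : ℝ => r ^ k) atTop).mul hf).trans_eventuallyEq ?_
  filter_upwards [eventually_gt_atTop 0] with r hr
  rw [← rpow_natCast, ← rpow_add hr]
  ring_nf

theorem isBigO_div_pow (n : ℕ) (c : ℝ) :
    (fun r => (c / r) ^ n) =O[atTop] fun r => r ^ (-(n : ℝ)) := by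
  refine ((isBigO_refl _ _).const_mul_left (c ^ n)).congr' ?_ EventuallyEq.rfl
  filter_upwards [eventually_gt_atTop 0] with r hr
  rw [div_pow, rpow_neg hr.le, rpow_natCast, div_eq_mul_inv]

end Asymptotics

theorem stmt_6_general (n : ℕ) (hn : 3 ≤ n) (r₀ : ℝ) (hr₀ : 0 < r₀) (uh vh wh : ℝ → ℝ)
    (hu : ContDiffOn ℝ 2 uh (Set.Ioi r₀)) (hv : ContDiffOn ℝ 2 vh (Set.Ioi r₀))
    (hw : ContDiffOn ℝ 2 wh (Set.Ioi r₀))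
    (hu0 : uh =O[atTop] fun r => r ^ (-(n : ℝ)))
    (hu1 : deriv uh =O[atTop] fun r => r ^ (-(n : ℝ) - 1))
    (hv1 : deriv vh =O[atTop] fun r => r ^ (-(n : ℝ) - 1))
    (hw1 : deriv wh =O[atTop] fun r => r ^ (-(n : ℝ) - 1))
    (hv2 : deriv (deriv vh) =O[atTop] fun r => r ^ (-(n : ℝ) - 2))
    (hw2 : deriv (deriv wh) =O[atTop] fun r => r ^ (-(n : ℝ) - 2)) :
    (fun r : ℝ =>
        Rop n (fun s => uHM n r₀ s + uh s) (fun s => vHM n r₀ s + vh s)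
            (fun s => wHM s + wh s) r -
          (-(n : ℝ) * ((n : ℝ) - 1) +
            2 * r ^ (1 - (n : ℝ)) *
              deriv (fun s => ((n : ℝ) - 1) * s ^ n * uh s - s ^ (n + 1) * deriv vh s -
                ((n : ℝ) - 2) * s ^ (n + 1) * deriv wh s) r))
      =O[atTop] fun r => r ^ (-2 * (n : ℝ)) := by
  have hg : Tendsto (fun r : ℝ => r ^ (-(n : ℝ))) atTop (𝓝 0) :=
    tendsto_rpow_neg_atTop (by norm_cast; omega)
  have hp := isBigO_div_pow n r₀
  have hx := isBigO_pow_mul_of_isBigO_rpow 1 (by simpa using hu1)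
  have hy := isBigO_pow_mul_of_isBigO_rpow 1 (by simpa using hv1)
  have hz := isBigO_pow_mul_of_isBigO_rpow 1 (by simpa using hw1)
  have hy₂ := isBigO_pow_mul_of_isBigO_rpow 2 (by simpa using hv2)
  have hz₂ := isBigO_pow_mul_of_isBigO_rpow 2 (by simpa using hw2)
  simp only [pow_one] at hx hy hz
  refine (isBigO_exp_mul_sub_linearization (-((n : ℝ) * ((n : ℝ) - 1))) hg hu0
    (isBigO_RopLinA n hx hy hz hy₂ hz₂) (isBigO_RopLinB n hx hy hz) (isBigO_RopQuad n hx hy hz)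
    (a := fun r => 1 - (r₀ / r) ^ n) (b := fun r => 2 + ((n : ℝ) - 2) * (r₀ / r) ^ n)
    (by simpa using hp.neg_left) (by simpa using hp.const_mul_left ((n : ℝ) - 2))).congr' ?_ ?_
  · filter_upwards [eventually_gt_atTop r₀] with r hr
    have du := (hu.eventually_differentiableAt isOpen_Ioi hr).self_of_nhds
    have dv' := hv.differentiableAt_deriv isOpen_Ioi hr
    have dw' := hw.differentiableAt_deriv isOpen_Ioi hr
    rw [Rop_HM_add_eq (by omega) hr₀.le hr du (hv.eventually_differentiableAt isOpen_Ioi hr) dv'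
        (hw.eventually_differentiableAt isOpen_Ioi hr) dw',
      two_rpow_mul_deriv_flux_eq n (hr₀.trans hr) du dv' dw']
    ring
  · filter_upwards [eventually_gt_atTop 0] with r hr
    rw [← rpow_natCast, ← rpow_mul hr.le]
    ring_nf

/-- Expansion of the scalar curvature of a perturbed Horowitz–Myers metric:
`R[u_{HM}+û, v_{HM}+v̂, w_{HM}+ŵ](r)
  = -n(n-1) + 2 r^{1-n} d/dr[(n-1) rⁿ û - r^{n+1} v̂' - (n-2) r^{n+1} ŵ'] + O(r^{-2n})`. -/
theorem stmt_6 (n : ℕ) (hn : 3 ≤ n) (r₀ : ℝ) (hr₀ : 0 < r₀) (uh vh wh : ℝ → ℝ)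
    (hu : ContDiffOn ℝ 2 uh (Set.Ioi r₀)) (hv : ContDiffOn ℝ 2 vh (Set.Ioi r₀))
    (hw : ContDiffOn ℝ 2 wh (Set.Ioi r₀))
    (hu0 : uh =O[atTop] fun r => r ^ (-(n : ℝ)))
    (hv0 : vh =O[atTop] fun r => r ^ (-(n : ℝ)))
    (hw0 : wh =O[atTop] fun r => r ^ (-(n : ℝ)))
    (hu1 : deriv uh =O[atTop] fun r => r ^ (-(n : ℝ) - 1))
    (hv1 : deriv vh =O[atTop] fun r => r ^ (-(n : ℝ) - 1))
    (hw1 : deriv wh =O[atTop] fun r => r ^ (-(n : ℝ) - 1))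
    (hu2 : deriv (deriv uh) =O[atTop] fun r => r ^ (-(n : ℝ) - 2))
    (hv2 : deriv (deriv vh) =O[atTop] fun r => r ^ (-(n : ℝ) - 2))
    (hw2 : deriv (deriv wh) =O[atTop] fun r => r ^ (-(n : ℝ) - 2)) :
    (fun r : ℝ =>
        Rop n (fun s => uHM n r₀ s + uh s) (fun s => vHM n r₀ s + vh s)
            (fun s => wHM s + wh s) r -
          (-(n : ℝ) * ((n : ℝ) - 1) +
            2 * r ^ (1 - (n : ℝ)) *
              deriv (fun s => ((n : ℝ) - 1) * s ^ n * uh s - s ^ (n + 1) * deriv vh s -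
                ((n : ℝ) - 2) * s ^ (n + 1) * deriv wh s) r))
      =O[atTop] fun r => r ^ (-2 * (n : ℝ)) :=
  stmt_6_general n hn r₀ hr₀ uh vh wh hu hv hw hu0 hu1 hv1 hw1 hv2 hw2
end

section
/- Fix an integer n ≥ 3, reals ℓ > 0, r₀ > 0, and let f(r) = (r²/ℓ²)(1 − (r₀/r)ⁿ). Then for every r ≥ r₀, −f″(r) + (n/(2r)) f′(r) + ((n−2)(n/2) − n²/4) f(r)/r² = (1/ℓ²)( n²/4 − 2 + (n² − 3n + 2 + n²/4)(r₀/r)ⁿ ) ≥ (n² − 8)/(4ℓ²) > 0. -/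
/-- The Horowitz–Myers radial profile `f(r) = (r²/ℓ²)(1 - (r₀/r)ⁿ)`. -/
noncomputable def fHM (n : ℕ) (ℓ r₀ r : ℝ) : ℝ := r ^ 2 / ℓ ^ 2 * (1 - (r₀ / r) ^ n)

/-!
Away from `r = 0` the profile is the sum of two powers, `(r² - r₀ⁿ r^(2-n)) / ℓ²`, so its first
two derivatives are explicit and the identity is algebra. The bound holds because the coefficient
of `(r₀/r)ⁿ ≥ 0` contains `n² - 3n + 2 = (n - 1)(n - 2)`, which is nonnegative for every natural
`n`.
-/

namespace HorowitzMyers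

open Topology

variable {n : ℕ} {ℓ r₀ x : ℝ}

lemma fHM_eq_zpow (hx : x ≠ 0) :
    fHM n ℓ r₀ x = (x ^ 2 - r₀ ^ n * x ^ (2 - n : ℤ)) / ℓ ^ 2 := by
  rw [fHM, zpow_sub₀ hx, zpow_natCast, zpow_ofNat, div_pow]
  field_simp

lemma fHM_eventuallyEq_zpow (hx : x ≠ 0) :
    fHM n ℓ r₀ =ᶠ[𝓝 x] fun y => (y ^ 2 - r₀ ^ n * y ^ (2 - n : ℤ)) / ℓ ^ 2 := by
  filter_upwards [eventually_ne_nhds hx] with y hy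
  exact fHM_eq_zpow hy

lemma hasDerivAt_fHM (hx : x ≠ 0) :
    HasDerivAt (fHM n ℓ r₀) ((2 * x - (2 - n) * r₀ ^ n * x ^ (1 - n : ℤ)) / ℓ ^ 2) x := by
  refine HasDerivAt.congr_of_eventuallyEq ?_ (fHM_eventuallyEq_zpow hx)
  refine (((hasDerivAt_pow 2 x).sub
    ((hasDerivAt_zpow (2 - n) x (Or.inl hx)).const_mul (r₀ ^ n))).div_const
      (ℓ ^ 2)).congr_deriv ?_
  rw [show (2 - n - 1 : ℤ) = 1 - n by ring]
  push_cast
  ring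

lemma deriv_fHM_eventuallyEq (hx : x ≠ 0) :
    deriv (fHM n ℓ r₀) =ᶠ[𝓝 x]
      fun y => (2 * y - (2 - n) * r₀ ^ n * y ^ (1 - n : ℤ)) / ℓ ^ 2 := by
  filter_upwards [eventually_ne_nhds hx] with y hy
  exact (hasDerivAt_fHM hy).deriv

lemma hasDerivAt_deriv_fHM (hx : x ≠ 0) :
    HasDerivAt (deriv (fHM n ℓ r₀))
      ((2 - (2 - n) * (1 - n) * r₀ ^ n * x ^ (-n : ℤ)) / ℓ ^ 2) x := by
  refine HasDerivAt.congr_of_eventuallyEq ?_ (deriv_fHM_eventuallyEq hx)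
  refine ((((hasDerivAt_id x).const_mul 2).sub
    ((hasDerivAt_zpow (1 - n) x (Or.inl hx)).const_mul ((2 - n) * r₀ ^ n))).div_const
      (ℓ ^ 2)).congr_deriv ?_
  rw [show (1 - n - 1 : ℤ) = -n by ring]
  push_cast
  ring

theorem potential_fHM_eq (hx : x ≠ 0) :
    -(deriv (deriv (fHM n ℓ r₀)) x) + (n : ℝ) / (2 * x) * deriv (fHM n ℓ r₀) x +
        (((n : ℝ) - 2) * ((n : ℝ) / 2) - (n : ℝ) ^ 2 / 4) * fHM n ℓ r₀ x / x ^ 2 =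
      1 / ℓ ^ 2 *
        ((n : ℝ) ^ 2 / 4 - 2 +
          ((n : ℝ) ^ 2 - 3 * (n : ℝ) + 2 + (n : ℝ) ^ 2 / 4) * (r₀ / x) ^ n) := by
  rw [(hasDerivAt_deriv_fHM hx).deriv, (hasDerivAt_fHM hx).deriv, fHM_eq_zpow hx,
    zpow_sub₀ hx, zpow_sub₀ hx, zpow_neg, zpow_natCast, zpow_one, zpow_ofNat, div_pow]
  have := pow_ne_zero n hx
  field_simp
  ring

lemma sub_one_mul_sub_two_nonneg (n : ℕ) : 0 ≤ ((n : ℝ) - 1) * ((n : ℝ) - 2) := by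
  rcases n with _ | _ | n
  · norm_num
  · norm_num
  · push_cast
    nlinarith

lemma potential_lowerBound_le {t : ℝ} (ht : 0 ≤ t) :
    ((n : ℝ) ^ 2 - 8) / (4 * ℓ ^ 2) ≤
      1 / ℓ ^ 2 *
        ((n : ℝ) ^ 2 / 4 - 2 + ((n : ℝ) ^ 2 - 3 * (n : ℝ) + 2 + (n : ℝ) ^ 2 / 4) * t) := by
  have hcoeff : 0 ≤ (n : ℝ) ^ 2 - 3 * (n : ℝ) + 2 + (n : ℝ) ^ 2 / 4 := by
    nlinarith [sub_one_mul_sub_two_nonneg n]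
  calc ((n : ℝ) ^ 2 - 8) / (4 * ℓ ^ 2) = 1 / ℓ ^ 2 * ((n : ℝ) ^ 2 / 4 - 2) := by ring
    _ ≤ _ := by gcongr; linarith [mul_nonneg hcoeff ht]

lemma potential_lowerBound_pos (hn : 3 ≤ n) (hℓ : ℓ ≠ 0) :
    0 < ((n : ℝ) ^ 2 - 8) / (4 * ℓ ^ 2) := by
  have : (3 : ℝ) ≤ n := by exact_mod_cast hn
  have : 0 < (n : ℝ) ^ 2 - 8 := by nlinarith
  positivity

end HorowitzMyers

/-- Pointwise identity and lower bound for the potential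
`W_{n/2}(f) = -f'' + (n/(2r)) f' + ((n-2)(n/2) - n²/4) f/r²`. -/
theorem stmt_12 (n : ℕ) (hn : 3 ≤ n) (ℓ r₀ : ℝ) (hℓ : 0 < ℓ) (hr₀ : 0 < r₀)
    (r : ℝ) (hr : r₀ ≤ r) :
    (-(deriv (deriv (fHM n ℓ r₀)) r) + (n : ℝ) / (2 * r) * deriv (fHM n ℓ r₀) r +
        (((n : ℝ) - 2) * ((n : ℝ) / 2) - (n : ℝ) ^ 2 / 4) * fHM n ℓ r₀ r / r ^ 2 =
      1 / ℓ ^ 2 *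
        ((n : ℝ) ^ 2 / 4 - 2 +
          ((n : ℝ) ^ 2 - 3 * (n : ℝ) + 2 + (n : ℝ) ^ 2 / 4) * (r₀ / r) ^ n)) ∧
    ((n : ℝ) ^ 2 - 8) / (4 * ℓ ^ 2) ≤
      1 / ℓ ^ 2 *
        ((n : ℝ) ^ 2 / 4 - 2 +
          ((n : ℝ) ^ 2 - 3 * (n : ℝ) + 2 + (n : ℝ) ^ 2 / 4) * (r₀ / r) ^ n) ∧
    0 < ((n : ℝ) ^ 2 - 8) / (4 * ℓ ^ 2) := by
  have hr_pos : 0 < r := hr₀.trans_le hr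
  exact ⟨HorowitzMyers.potential_fHM_eq hr_pos.ne',
    HorowitzMyers.potential_lowerBound_le (by positivity),
    HorowitzMyers.potential_lowerBound_pos hn hℓ.ne'⟩
end

section
/- Fix an integer n ≥ 3, reals ℓ > 0, r₀ > 0, and let f(r) = (r²/ℓ²)(1 − (r₀/r)ⁿ). Let h be a C¹ function on [r₀,∞) with h(r) = O(r^{−n}) and h′(r) = O(r^{−n−1}) as r → ∞. Then ∫_{r₀}^∞ f(r) ( h′(r)² − (2/r²) h(r)² ) r^{n−1} dr ≥ 0. -/
/-!
Write `g r = rⁿ - r₀ⁿ`, so that `f r · rⁿ⁻¹ = r g r / ℓ²`. Completing the square in `h'`,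
`r g h'² - 2 g h² / r + 2 (g h²)' = r g (h' + 2h/r)² + 2 (r g' - 3 g) h² / r`,
and `r g' - 3 g = (n - 3) rⁿ + 3 r₀ⁿ ≥ 0` because `n ≥ 3`. The boundary term `g h²`
vanishes at `r₀` and, being `O(r⁻ⁿ)`, at infinity, so the integral is that of a
nonnegative function.
-/

open Filter MeasureTheory

open Set Asymptotics Topology

lemma hardy_integrand_add_deriv_nonneg {r g g' u u' : ℝ} (hr : 0 < r) (hg : 0 ≤ g)
    (hg' : 3 * g ≤ r * g') :
    0 ≤ r * g * u' ^ 2 - 2 * g * u ^ 2 / r + 2 * (g' * u ^ 2 + g * (2 * u * u')) := by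
  have key : r * g * u' ^ 2 - 2 * g * u ^ 2 / r + 2 * (g' * u ^ 2 + g * (2 * u * u'))
      = r * g * (u' + 2 * u / r) ^ 2 + 2 * (r * g' - 3 * g) / r * u ^ 2 := by
    field_simp
    ring
  rw [key]
  exact add_nonneg (by positivity)
    (mul_nonneg (div_nonneg (by linarith) hr.le) (sq_nonneg u))

lemma setIntegral_Ioi_nonneg_of_add_deriv_nonneg {a : ℝ} {F G G' : ℝ → ℝ}
    (hGa : ContinuousWithinAt G (Ici a) a) (hG_a : G a = 0)
    (hG : ∀ x ∈ Ioi a, HasDerivAt G (G' x) x) (hG'int : IntegrableOn G' (Ioi a))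
    (hG_top : Tendsto G atTop (𝓝 0)) (hF : ∀ x ∈ Ioi a, 0 ≤ F x + G' x) :
    0 ≤ ∫ x in Ioi a, F x := by
  by_cases hFint : IntegrableOn F (Ioi a)
  · have hG'zero : ∫ x in Ioi a, G' x = 0 := by
      rw [integral_Ioi_of_hasDerivAt_of_tendsto hGa hG hG'int hG_top, hG_a, sub_zero]
    calc 0 ≤ ∫ x in Ioi a, (F x + G' x) := setIntegral_nonneg measurableSet_Ioi hF
      _ = ∫ x in Ioi a, F x := by rw [integral_add hFint hG'int, hG'zero, add_zero]
  · rw [integral_undef hFint]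

theorem integral_weighted_hardy_nonneg {a : ℝ} (ha : 0 ≤ a) {g g' u u' : ℝ → ℝ}
    (hg : ∀ r ∈ Ioi a, HasDerivAt g (g' r) r) (hu : ∀ r ∈ Ioi a, HasDerivAt u (u' r) r)
    (hg_nonneg : ∀ r ∈ Ioi a, 0 ≤ g r) (hg_growth : ∀ r ∈ Ioi a, 3 * g r ≤ r * g' r)
    (hg_a : g a = 0) (hcont : ContinuousWithinAt (fun r => g r * u r ^ 2) (Ici a) a)
    (htop : Tendsto (fun r => g r * u r ^ 2) atTop (𝓝 0))
    (hint : IntegrableOn (fun r => g' r * u r ^ 2 + g r * (2 * u r * u' r)) (Ioi a)) :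
    0 ≤ ∫ r in Ioi a, r * g r * u' r ^ 2 - 2 * g r * u r ^ 2 / r := by
  refine setIntegral_Ioi_nonneg_of_add_deriv_nonneg (G := fun r => 2 * (g r * u r ^ 2))
    (hcont.const_mul 2) (by simp [hg_a]) (fun r hr => ?_) (hint.const_mul 2)
    (by simpa using htop.const_mul 2) fun r hr =>
      hardy_integrand_add_deriv_nonneg (ha.trans_lt hr) (hg_nonneg r hr) (hg_growth r hr)
  refine (((hg r hr).fun_mul ((hu r hr).fun_pow 2)).const_mul 2).congr_deriv ?_
  norm_num

lemma isBigO_pow_sub_pow_atTop (n : ℕ) {c : ℝ} (hc : 0 ≤ c) :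
    (fun r : ℝ => r ^ n - c ^ n) =O[atTop] fun r => r ^ (n : ℝ) := by
  refine IsBigO.of_bound 1 ?_
  filter_upwards [eventually_ge_atTop c] with r hr
  have hcr : c ^ n ≤ r ^ n := pow_le_pow_left₀ hc hr n
  rw [Real.rpow_natCast, one_mul, Real.norm_of_nonneg (sub_nonneg.2 hcr),
    Real.norm_of_nonneg (pow_nonneg (hc.trans hr) n)]
  linarith [pow_nonneg hc n]

lemma fHM_mul_pow_pred {n : ℕ} (hn : 1 ≤ n) (ℓ r₀ : ℝ) {r : ℝ} (hr : r ≠ 0) :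
    fHM n ℓ r₀ r * r ^ (n - 1) = (ℓ ^ 2)⁻¹ * (r * (r ^ n - r₀ ^ n)) := by
  obtain ⟨m, rfl⟩ := Nat.exists_eq_add_of_le' hn
  simp only [fHM, div_pow, Nat.add_sub_cancel]
  field_simp
  ring

lemma isBigO_sq_rpow_atTop {u : ℝ → ℝ} {s : ℝ} (hu : u =O[atTop] fun r => r ^ s) :
    (fun r => u r ^ 2) =O[atTop] fun r => r ^ (s + s) :=
  (hu.mul_atTop_rpow_of_isBigO_rpow _ _ _ hu le_rfl).congr_left fun r => (sq (u r)).symm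

lemma tendsto_pow_sub_pow_mul_sq_atTop {n : ℕ} (hn : 0 < n) {c : ℝ} (hc : 0 ≤ c) {u : ℝ → ℝ}
    (hu : u =O[atTop] fun r => r ^ (-(n : ℝ))) :
    Tendsto (fun r => (r ^ n - c ^ n) * u r ^ 2) atTop (𝓝 0) :=
  ((isBigO_pow_sub_pow_atTop n hc).mul_atTop_rpow_of_isBigO_rpow _ _ (-(n : ℝ))
    (isBigO_sq_rpow_atTop hu) (by linarith)).trans_tendsto
    (tendsto_rpow_neg_atTop (by exact_mod_cast hn))

lemma isBigO_deriv_pow_sub_pow_mul_sq (n : ℕ) {c : ℝ} (hc : 0 ≤ c) {u v : ℝ → ℝ}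
    (hu : u =O[atTop] fun r => r ^ (-(n : ℝ)))
    (hv : v =O[atTop] fun r => r ^ (-(n : ℝ) - 1)) :
    (fun r => n * r ^ (n - 1) * u r ^ 2 + (r ^ n - c ^ n) * (2 * u r * v r))
      =O[atTop] fun r => r ^ (-(n : ℝ)) := by
  have hpow_pred :
      (fun r : ℝ => n * r ^ (n - 1)) =O[atTop] fun r => r ^ ((n - 1 : ℕ) : ℝ) := by
    simpa only [Real.rpow_natCast] using
      (isBigO_refl (fun r : ℝ => r ^ (n - 1)) atTop).const_mul_left (n : ℝ)
  have hpred : ((n - 1 : ℕ) : ℝ) ≤ n := by exact_mod_cast Nat.sub_le n 1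
  exact (hpow_pred.mul_atTop_rpow_of_isBigO_rpow _ _ _ (isBigO_sq_rpow_atTop hu)
      (by linarith)).add
    ((isBigO_pow_sub_pow_atTop n hc).mul_atTop_rpow_of_isBigO_rpow _ _ _
      ((hu.const_mul_left 2).mul_atTop_rpow_of_isBigO_rpow _ _ _ hv le_rfl) (by linarith))

theorem integral_pow_sub_pow_hardy_nonneg {n : ℕ} (hn : 3 ≤ n) {a : ℝ} (ha : 0 < a)
    {u : ℝ → ℝ} (hC1 : ContDiffOn ℝ 1 u (Ici a))
    (hO : u =O[atTop] fun r => r ^ (-(n : ℝ)))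
    (hO' : deriv u =O[atTop] fun r => r ^ (-(n : ℝ) - 1)) :
    0 ≤ ∫ r in Ioi a,
      r * (r ^ n - a ^ n) * deriv u r ^ 2 - 2 * (r ^ n - a ^ n) * u r ^ 2 / r := by
  have hnR : (3 : ℝ) ≤ n := by exact_mod_cast hn
  set D := derivWithin u (Ici a)
  have hD : ∀ r ∈ Ioi a, HasDerivAt u (D r) r := fun r hr =>
    ((hC1.differentiableOn one_ne_zero r (mem_Ici.2 hr.le)).hasDerivWithinAt).hasDerivAt
      (Ici_mem_nhds hr)
  have hDO : D =O[atTop] fun r => r ^ (-(n : ℝ) - 1) :=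
    hO'.congr' (eventually_gt_atTop a |>.mono fun r hr => (hD r hr).deriv) EventuallyEq.rfl
  have hu_cont : ContinuousOn u (Ici a) := hC1.continuousOn
  have hD_cont : ContinuousOn D (Ici a) :=
    hC1.continuousOn_derivWithin (uniqueDiffOn_Ici a) le_rfl
  have hint : IntegrableOn
      (fun r => n * r ^ (n - 1) * u r ^ 2 + (r ^ n - a ^ n) * (2 * u r * D r)) (Ioi a) :=
    ((ContinuousOn.locallyIntegrableOn (by fun_prop) measurableSet_Ici)
      |>.integrableOn_of_isBigO_atTop (isBigO_deriv_pow_sub_pow_mul_sq n ha.le hO hDO)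
        (integrableAtFilter_rpow_atTop_iff.2 (by linarith))).mono_set Ioi_subset_Ici_self
  have hgrowth : ∀ r ∈ Ioi a, 3 * (r ^ n - a ^ n) ≤ r * (n * r ^ (n - 1)) := fun r hr => by
    rw [← mul_assoc, mul_comm r, mul_assoc, mul_pow_sub_one (by omega) r]
    nlinarith [pow_nonneg (ha.le.trans hr.out.le) n, pow_nonneg ha.le n]
  rw [setIntegral_congr_fun measurableSet_Ioi fun r hr => by rw [(hD r hr).deriv]]
  exact integral_weighted_hardy_nonneg ha.le (fun r _ => (hasDerivAt_pow n r).sub_const _) hD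
    (fun r hr => sub_nonneg.2 (pow_le_pow_left₀ ha.le hr.le n)) hgrowth (by simp)
    ((by fun_prop : ContinuousOn (fun r => (r ^ n - a ^ n) * u r ^ 2) (Ici a)) a self_mem_Ici)
    (tendsto_pow_sub_pow_mul_sq_atTop (by omega) ha.le hO) hint

theorem stmt_14_general (n : ℕ) (hn : 3 ≤ n) (ℓ r₀ : ℝ) (hr₀ : 0 < r₀)
    (h : ℝ → ℝ) (hC1 : ContDiffOn ℝ 1 h (Set.Ici r₀))
    (hO : h =O[atTop] fun r => r ^ (-(n : ℝ)))
    (hO' : deriv h =O[atTop] fun r => r ^ (-(n : ℝ) - 1)) :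
    0 ≤ ∫ r in Set.Ioi r₀,
        fHM n ℓ r₀ r * (deriv h r ^ 2 - 2 / r ^ 2 * h r ^ 2) * r ^ (n - 1) := by
  have hintegrand : ∀ r ∈ Ioi r₀,
      fHM n ℓ r₀ r * (deriv h r ^ 2 - 2 / r ^ 2 * h r ^ 2) * r ^ (n - 1)
        = (ℓ ^ 2)⁻¹ * (r * (r ^ n - r₀ ^ n) * deriv h r ^ 2
          - 2 * (r ^ n - r₀ ^ n) * h r ^ 2 / r) := by
    intro r hr
    have hr0 : r ≠ 0 := (hr₀.trans hr).ne'
    rw [mul_right_comm, fHM_mul_pow_pred (by omega) ℓ r₀ hr0]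
    field_simp
  rw [setIntegral_congr_fun measurableSet_Ioi hintegrand, integral_const_mul]
  exact mul_nonneg (by positivity) (integral_pow_sub_pow_hardy_nonneg hn hr₀ hC1 hO hO')

/-- Non-negativity of `∫ f (h'² - (2/r²) h²) r^{n-1} dr`: the contribution of
the trace-free toroidal perturbation components to the second-order mass. -/
theorem stmt_14 (n : ℕ) (hn : 3 ≤ n) (ℓ r₀ : ℝ) (hℓ : 0 < ℓ) (hr₀ : 0 < r₀)
    (h : ℝ → ℝ) (hC1 : ContDiffOn ℝ 1 h (Set.Ici r₀))
    (hO : h =O[atTop] fun r => r ^ (-(n : ℝ)))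
    (hO' : deriv h =O[atTop] fun r => r ^ (-(n : ℝ) - 1)) :
    0 ≤ ∫ r in Set.Ioi r₀,
        fHM n ℓ r₀ r * (deriv h r ^ 2 - 2 / r ^ 2 * h r ^ 2) * r ^ (n - 1) :=
  stmt_14_general n hn ℓ r₀ hr₀ h hC1 hO hO'
end

section
/- Fix an integer n ≥ 3, reals ℓ > 0, r₀ > 0, and let f(r) = (r²/ℓ²)(1 − (r₀/r)ⁿ). Let ζ be a C¹ function on [r₀,∞) with ζ(r) = O(r^{−n}) and ζ′(r) = O(r^{−n−1}) as r → ∞, and let α ∈ ℝ. Then ∫_{r₀}^∞ f(r) ζ′(r)² r^{n−1} dr ≥ ∫_{r₀}^∞ ( α ( r f′(r) + (n−2) f(r) ) − α² f(r) ) ζ(r)² r^{n−3} dr. -/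
open Filter MeasureTheory

/-!
Complete the square. With the boundary term `F = f r^{n-2} ζ²`, the integrand
`f ζ'² r^{n-1} - (α (r f' + (n-2) f) - α² f) ζ² r^{n-3} + α F'` equals
`f r^{n-3} (r ζ' + α ζ)² ≥ 0`.
Since `f(r₀) = 0` and `F → 0` at infinity, `∫ F' = 0`. The decay of `ζ` and `ζ'` against the
growth `f = O(r²)`, `f' = O(r)` makes every integrand `O(r^{-n-1})`, hence integrable.
-/

open Set Asymptotics Topology

lemma integrableOn_Ioi_of_isBigO_rpow {a c : ℝ} {h : ℝ → ℝ} (hc : c < -1)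
    (hcont : ContinuousOn h (Ici a)) (hO : h =O[atTop] (· ^ c)) : IntegrableOn h (Ioi a) :=
  ((hcont.locallyIntegrableOn measurableSet_Ici).integrableOn_of_isBigO_atTop hO
    (integrableAtFilter_rpow_atTop_iff.2 hc)).mono_set Ioi_subset_Ici_self

lemma Asymptotics.IsBigO.mul_rpow {u v : ℝ → ℝ} {c d e : ℝ} (hu : u =O[atTop] (· ^ c))
    (hv : v =O[atTop] (· ^ d)) (he : c + d = e) : (fun r => u r * v r) =O[atTop] (· ^ e) :=
  (hu.mul hv).congr' EventuallyEq.rfl <| by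
    filter_upwards [eventually_gt_atTop 0] with r hr
    rw [← he, Real.rpow_add hr]

lemma isBigO_pow_rpow (k : ℕ) : (fun r : ℝ => r ^ k) =O[atTop] (· ^ (k : ℝ)) := by
  simp only [Real.rpow_natCast]
  exact isBigO_refl _ _

lemma Asymptotics.IsBigO.sq_rpow {u : ℝ → ℝ} {c : ℝ} (hu : u =O[atTop] (· ^ c)) :
    (fun r => u r ^ 2) =O[atTop] (· ^ (2 * c)) := by
  simpa only [sq] using hu.mul_rpow hu (two_mul c).symm

lemma Asymptotics.IsBigO.tendsto_zero_of_rpow {u : ℝ → ℝ} {c : ℝ}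
    (hu : u =O[atTop] (· ^ c)) (hc : c < 0) : Tendsto u atTop (𝓝 0) :=
  hu.trans_tendsto <| by simpa using tendsto_rpow_neg_atTop (neg_pos.2 hc)

section Hardy

-- `m` plays the role of `n - 3`, so that no truncated subtraction occurs in the exponents.
variable {a : ℝ} {f f' ζ ζ' : ℝ → ℝ} (m : ℕ) (α : ℝ)

lemma hardy_completing_square (r f f' ζ ζ' : ℝ) :
    f * ζ' ^ 2 * r ^ (m + 2) - (α * (r * f' + (m + 1) * f) - α ^ 2 * f) * ζ ^ 2 * r ^ m
        + α * ((r * f' + (m + 1) * f) * r ^ m * ζ ^ 2 + 2 * f * r ^ (m + 1) * ζ * ζ') =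
      f * r ^ m * (r * ζ' + α * ζ) ^ 2 := by
  ring

lemma hasDerivAt_hardy_boundary {r : ℝ} (hf : HasDerivAt f (f' r) r)
    (hζ : HasDerivAt ζ (ζ' r) r) :
    HasDerivAt (fun r => f r * r ^ (m + 1) * ζ r ^ 2)
      ((r * f' r + (m + 1) * f r) * r ^ m * ζ r ^ 2 + 2 * f r * r ^ (m + 1) * ζ r * ζ' r) r := by
  refine ((hf.mul (hasDerivAt_pow (m + 1) r)).mul (hζ.pow 2)).congr_deriv ?_
  simp only [Pi.mul_apply, Pi.pow_apply, Nat.add_sub_cancel]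
  push_cast
  ring

theorem integral_hardy_le_of_integrableOn (ha : 0 ≤ a)
    (hf : ∀ r ∈ Ioi a, HasDerivAt f (f' r) r) (hζ : ∀ r ∈ Ioi a, HasDerivAt ζ (ζ' r) r)
    (hf_nonneg : ∀ r ∈ Ioi a, 0 ≤ f r) (hfa : f a = 0)
    (hF_cont : ContinuousWithinAt (fun r => f r * r ^ (m + 1) * ζ r ^ 2) (Ici a) a)
    (hF_top : Tendsto (fun r => f r * r ^ (m + 1) * ζ r ^ 2) atTop (𝓝 0))
    (hF' : IntegrableOn (fun r => (r * f' r + (m + 1) * f r) * r ^ m * ζ r ^ 2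
      + 2 * f r * r ^ (m + 1) * ζ r * ζ' r) (Ioi a))
    (hL : IntegrableOn
      (fun r => (α * (r * f' r + (m + 1) * f r) - α ^ 2 * f r) * ζ r ^ 2 * r ^ m) (Ioi a))
    (hR : IntegrableOn (fun r => f r * ζ' r ^ 2 * r ^ (m + 2)) (Ioi a)) :
    ∫ r in Ioi a, (α * (r * f' r + (m + 1) * f r) - α ^ 2 * f r) * ζ r ^ 2 * r ^ m ≤
      ∫ r in Ioi a, f r * ζ' r ^ 2 * r ^ (m + 2) := by
  have hF'_zero : ∫ r in Ioi a, ((r * f' r + (m + 1) * f r) * r ^ m * ζ r ^ 2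
      + 2 * f r * r ^ (m + 1) * ζ r * ζ' r) = 0 := by
    rw [integral_Ioi_of_hasDerivAt_of_tendsto hF_cont
      (fun r hr => hasDerivAt_hardy_boundary m (hf r hr) (hζ r hr)) hF' hF_top]
    simp [hfa]
  have hsq : (∫ r in Ioi a, f r * ζ' r ^ 2 * r ^ (m + 2)) -
      ∫ r in Ioi a, (α * (r * f' r + (m + 1) * f r) - α ^ 2 * f r) * ζ r ^ 2 * r ^ m =
      ∫ r in Ioi a, f r * r ^ m * (r * ζ' r + α * ζ r) ^ 2 := by
    rw [← add_zero (_ - _), ← mul_zero α, ← hF'_zero, ← integral_sub hR hL,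
      ← integral_const_mul, ← integral_add _ (hF'.const_mul α)]
    · simp only [hardy_completing_square]
    · exact hR.sub hL
  have hS : 0 ≤ ∫ r in Ioi a, f r * r ^ m * (r * ζ' r + α * ζ r) ^ 2 :=
    setIntegral_nonneg measurableSet_Ioi fun r hr =>
      have : 0 ≤ r := ha.trans hr.le
      mul_nonneg (mul_nonneg (hf_nonneg r hr) (pow_nonneg this m)) (sq_nonneg _)
  linarith


theorem integral_hardy_le_of_isBigO {p s : ℝ} (ha : 0 ≤ a)
    (hf : ∀ r ∈ Ioi a, HasDerivAt f (f' r) r) (hζ : ∀ r ∈ Ioi a, HasDerivAt ζ (ζ' r) r)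
    (hf_cont : ContinuousOn f (Ici a)) (hf'_cont : ContinuousOn f' (Ici a))
    (hζ_cont : ContinuousOn ζ (Ici a)) (hζ'_cont : ContinuousOn ζ' (Ici a))
    (hf_nonneg : ∀ r ∈ Ioi a, 0 ≤ f r) (hfa : f a = 0)
    (hfO : f =O[atTop] (· ^ p)) (hf'O : f' =O[atTop] (· ^ (p - 1)))
    (hζO : ζ =O[atTop] (· ^ (-s))) (hζ'O : ζ' =O[atTop] (· ^ (-s - 1)))
    (hps : p + m + 1 < 2 * s) :
    ∫ r in Ioi a, (α * (r * f' r + (m + 1) * f r) - α ^ 2 * f r) * ζ r ^ 2 * r ^ m ≤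
      ∫ r in Ioi a, f r * ζ' r ^ 2 * r ^ (m + 2) := by
  have hid : (fun r : ℝ => r) =O[atTop] (· ^ (1 : ℝ)) := by simpa using isBigO_pow_rpow 1
  have hu : (fun r => r * f' r + (m + 1) * f r) =O[atTop] (· ^ p) :=
    (hid.mul_rpow hf'O (by ring)).add (hfO.const_mul_left _)
  have hF'O : (fun r => (r * f' r + (m + 1) * f r) * r ^ m * ζ r ^ 2
      + 2 * f r * r ^ (m + 1) * ζ r * ζ' r) =O[atTop] (· ^ (p + m - 2 * s)) :=
    ((hu.mul_rpow (isBigO_pow_rpow m) rfl).mul_rpow hζO.sq_rpow (by ring)).add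
      ((((hfO.const_mul_left 2).mul_rpow (isBigO_pow_rpow (m + 1)) rfl).mul_rpow hζO rfl).mul_rpow
        hζ'O (by push_cast; ring))
  have hLO : (fun r => (α * (r * f' r + (m + 1) * f r) - α ^ 2 * f r) * ζ r ^ 2 * r ^ m)
      =O[atTop] (· ^ (p + m - 2 * s)) :=
    (((hu.const_mul_left α).sub (hfO.const_mul_left (α ^ 2))).mul_rpow hζO.sq_rpow rfl).mul_rpow
      (isBigO_pow_rpow m) (by ring)
  have hRO : (fun r => f r * ζ' r ^ 2 * r ^ (m + 2)) =O[atTop] (· ^ (p + m - 2 * s)) :=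
    (hfO.mul_rpow hζ'O.sq_rpow rfl).mul_rpow (isBigO_pow_rpow (m + 2)) (by push_cast; ring)
  have hFO : (fun r => f r * r ^ (m + 1) * ζ r ^ 2) =O[atTop] (· ^ (p + (m + 1) - 2 * s)) :=
    (hfO.mul_rpow (isBigO_pow_rpow (m + 1)) rfl).mul_rpow hζO.sq_rpow (by push_cast; ring)
  have he : p + m - 2 * s < -1 := by linarith
  refine integral_hardy_le_of_integrableOn m α ha hf hζ hf_nonneg hfa ?_
    (hFO.tendsto_zero_of_rpow (by linarith)) (integrableOn_Ioi_of_isBigO_rpow he ?_ hF'O)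
    (integrableOn_Ioi_of_isBigO_rpow he ?_ hLO) (integrableOn_Ioi_of_isBigO_rpow he ?_ hRO)
  · exact ContinuousOn.continuousWithinAt (by fun_prop) self_mem_Ici
  all_goals fun_prop

end Hardy

noncomputable def fHMDeriv (n : ℕ) (ℓ r₀ r : ℝ) : ℝ :=
  r / ℓ ^ 2 * (2 + ((n : ℝ) - 2) * (r₀ / r) ^ n)

lemma hasDerivAt_fHM (n : ℕ) (ℓ r₀ : ℝ) {r : ℝ} (hr : r ≠ 0) :
    HasDerivAt (fHM n ℓ r₀) (fHMDeriv n ℓ r₀ r) r := by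
  have hq : HasDerivAt (fun r => r₀ / r) (-(r₀ / r ^ 2)) r := by
    simpa [div_eq_mul_inv] using (hasDerivAt_inv hr).const_mul r₀
  refine (((hasDerivAt_pow 2 r).div_const (ℓ ^ 2)).mul ((hq.pow n).const_sub 1)).congr_deriv ?_
  unfold fHMDeriv
  rcases n with _ | k
  · simp
  · rcases eq_or_ne ℓ 0 with rfl | hℓ
    · simp
    simp only [Pi.pow_apply, Nat.add_sub_cancel, div_pow]
    field_simp
    push_cast
    ring

lemma fHM_nonneg (n : ℕ) (ℓ : ℝ) {r₀ r : ℝ} (hr₀ : 0 ≤ r₀) (hr : r₀ ≤ r) :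
    0 ≤ fHM n ℓ r₀ r :=
  mul_nonneg (by positivity) <| sub_nonneg.2 <|
    pow_le_one₀ (div_nonneg hr₀ (hr₀.trans hr)) (div_le_one_of_le₀ hr (hr₀.trans hr))

lemma tendsto_div_pow_atTop (n : ℕ) (r₀ : ℝ) :
    Tendsto (fun r => (r₀ / r) ^ n) atTop (𝓝 (0 ^ n)) :=
  (tendsto_const_nhds.div_atTop tendsto_id).pow n

lemma fHM_isBigO (n : ℕ) (ℓ r₀ : ℝ) : fHM n ℓ r₀ =O[atTop] (· ^ (2 : ℝ)) := by
  have hv := (((tendsto_div_pow_atTop n r₀).const_sub 1).div_const (ℓ ^ 2)).isBigO_one ℝ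
  refine ((isBigO_refl (fun r : ℝ => r ^ 2) atTop).mul hv).congr (fun r => ?_) (fun r => ?_)
  · simp only [fHM]; ring
  · simp

lemma fHMDeriv_isBigO (n : ℕ) (ℓ r₀ : ℝ) :
    fHMDeriv n ℓ r₀ =O[atTop] (· ^ (1 : ℝ)) := by
  have hv := ((((tendsto_div_pow_atTop n r₀).const_mul ((n : ℝ) - 2)).const_add 2).div_const
    (ℓ ^ 2)).isBigO_one ℝ
  refine ((isBigO_refl (fun r : ℝ => r) atTop).mul hv).congr (fun r => ?_) (fun r => ?_)
  · simp only [fHMDeriv]; ring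
  · simp

lemma ContDiffOn.hasDerivAt_derivWithin_Ici {ζ : ℝ → ℝ} {a r : ℝ}
    (hζ : ContDiffOn ℝ 1 ζ (Ici a)) (hr : r ∈ Ioi a) :
    HasDerivAt ζ (derivWithin ζ (Ici a) r) r := by
  rw [derivWithin_of_mem_nhds (Ici_mem_nhds hr)]
  exact ((hζ.differentiableOn one_ne_zero r (mem_Ici.2 hr.le)).differentiableAt
    (Ici_mem_nhds hr)).hasDerivAt

theorem stmt_15_general (n : ℕ) (hn : 3 ≤ n) (ℓ r₀ : ℝ) (hr₀ : 0 < r₀)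
    (ζ : ℝ → ℝ) (hC1 : ContDiffOn ℝ 1 ζ (Set.Ici r₀))
    (hO : ζ =O[atTop] fun r => r ^ (-(n : ℝ)))
    (hO' : deriv ζ =O[atTop] fun r => r ^ (-(n : ℝ) - 1)) (α : ℝ) :
    (∫ r in Set.Ioi r₀,
        (α * (r * deriv (fHM n ℓ r₀) r + ((n : ℝ) - 2) * fHM n ℓ r₀ r) -
          α ^ 2 * fHM n ℓ r₀ r) * ζ r ^ 2 * r ^ (n - 3)) ≤
      ∫ r in Set.Ioi r₀, fHM n ℓ r₀ r * deriv ζ r ^ 2 * r ^ (n - 1) := by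
  obtain ⟨m, rfl⟩ := Nat.exists_eq_add_of_le' hn
  have hpos : ∀ r ∈ Ici r₀, r ≠ 0 := fun r hr => (hr₀.trans_le hr).ne'
  have hf : ∀ r ∈ Ici r₀, HasDerivAt (fHM (m + 3) ℓ r₀) (fHMDeriv (m + 3) ℓ r₀ r) r :=
    fun r hr => hasDerivAt_fHM _ ℓ r₀ (hpos r hr)
  have hζ : ∀ r ∈ Ioi r₀, HasDerivAt ζ (derivWithin ζ (Ici r₀) r) r :=
    fun r hr => hC1.hasDerivAt_derivWithin_Ici hr
  rw [setIntegral_congr_fun measurableSet_Ioi fun r hr => by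
    rw [(hf r (Ioi_subset_Ici_self hr)).deriv]]
  conv_rhs => rw [setIntegral_congr_fun measurableSet_Ioi fun r hr => by rw [(hζ r hr).deriv]]
  have hcoeff : ((m + 3 : ℕ) : ℝ) - 2 = m + 1 := by push_cast; ring
  rw [hcoeff, show m + 3 - 3 = m by omega, show m + 3 - 1 = m + 2 by omega]
  refine integral_hardy_le_of_isBigO m α hr₀.le (fun r hr => hf r (Ioi_subset_Ici_self hr)) hζ
    (fun r hr => (hf r hr).continuousAt.continuousWithinAt)
    (by unfold fHMDeriv; fun_prop (disch := assumption)) hC1.continuousOn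
    (hC1.continuousOn_derivWithin (uniqueDiffOn_Ici r₀) le_rfl)
    (fun r hr => fHM_nonneg _ ℓ hr₀.le (mem_Ioi.1 hr).le)
    (by simp [fHM, div_self hr₀.ne']) (fHM_isBigO _ ℓ r₀) ?_ hO ?_ (by push_cast; linarith)
  · norm_num
    simpa using fHMDeriv_isBigO _ ℓ r₀
  · refine hO'.congr' ?_ EventuallyEq.rfl
    filter_upwards [eventually_gt_atTop r₀] with r hr using (hζ r hr).deriv

/-- The Hardy-type inequality
`∫ f ζ'² r^{n-1} dr ≥ ∫ (α (r f' + (n-2) f) - α² f) ζ² r^{n-3} dr`. -/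
theorem stmt_15 (n : ℕ) (hn : 3 ≤ n) (ℓ r₀ : ℝ) (hℓ : 0 < ℓ) (hr₀ : 0 < r₀)
    (ζ : ℝ → ℝ) (hC1 : ContDiffOn ℝ 1 ζ (Set.Ici r₀))
    (hO : ζ =O[atTop] fun r => r ^ (-(n : ℝ)))
    (hO' : deriv ζ =O[atTop] fun r => r ^ (-(n : ℝ) - 1)) (α : ℝ) :
    (∫ r in Set.Ioi r₀,
        (α * (r * deriv (fHM n ℓ r₀) r + ((n : ℝ) - 2) * fHM n ℓ r₀ r) -
          α ^ 2 * fHM n ℓ r₀ r) * ζ r ^ 2 * r ^ (n - 3)) ≤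
      ∫ r in Set.Ioi r₀, fHM n ℓ r₀ r * deriv ζ r ^ 2 * r ^ (n - 1) :=
  stmt_15_general n hn ℓ r₀ hr₀ ζ hC1 hO hO' α
end

section
/- Let n = 3, ℓ = r₀ = 1, f(r) = r² − r^{−1}, φ(r) = r^{−5} and ξ(r) = (30 − 11r³)/(3r⁵). Then I := ∫₁^∞ [ (5/24) f(r) φ′(r)² + (f(r)/8) ξ′(r)² − (1/2)( f′(r)/r − f″(r)/4 ) ξ(r)² − (5/(4r³)) ξ(r) φ(r) + (5/24) φ(r)² ] r² dr = −79/84. -/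
/-!
For `r > 0` the integrand, once the derivatives of `φ`, `ξ` and `f` are evaluated, is the Laurent
polynomial `-121/36 r⁻² - 1925/36 r⁻⁵ + 2365/6 r⁻⁸ - 9725/24 r⁻¹¹`, and `∫₁^∞ r⁻ⁿ dr = 1/(n-1)`
for `n ≥ 2`, so `I = -121/36 - 1925/144 + 2365/42 - 9725/240 = -79/84`.
-/

open MeasureTheory Set

lemma integrableOn_Ioi_one_inv_pow {n : ℕ} (hn : 2 ≤ n) :
    IntegrableOn (fun r : ℝ => (r ^ n)⁻¹) (Ioi 1) := by
  refine (integrableOn_Ioi_rpow_of_lt (a := -(n : ℝ)) (by norm_cast; omega) one_pos).congr_fun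
    (fun r hr => ?_) measurableSet_Ioi
  simp only [Real.rpow_neg (zero_le_one.trans (le_of_lt hr)), Real.rpow_natCast]

lemma integral_Ioi_one_inv_pow {n : ℕ} (hn : 2 ≤ n) :
    ∫ r in Ioi (1 : ℝ), (r ^ n)⁻¹ = 1 / (n - 1) := by
  have hn' : (2 : ℝ) ≤ n := by exact_mod_cast hn
  calc ∫ r in Ioi (1 : ℝ), (r ^ n)⁻¹ = ∫ r in Ioi (1 : ℝ), r ^ (-(n : ℝ)) :=
        setIntegral_congr_fun measurableSet_Ioi fun r hr => by
          rw [Real.rpow_neg (zero_le_one.trans (le_of_lt hr)), Real.rpow_natCast]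
    _ = 1 / (n - 1) := by
        rw [integral_Ioi_rpow_of_lt (by linarith) one_pos, Real.one_rpow, neg_div, ← div_neg,
          neg_add', neg_neg]

lemma integral_Ioi_one_sum_mul_inv_pow {ι : Type*} (s : Finset ι) (c : ι → ℝ) (n : ι → ℕ)
    (hn : ∀ i ∈ s, 2 ≤ n i) :
    ∫ r in Ioi (1 : ℝ), ∑ i ∈ s, c i * (r ^ n i)⁻¹ = ∑ i ∈ s, c i / (n i - 1) := by
  rw [integral_finsetSum s fun i hi => (integrableOn_Ioi_one_inv_pow (hn i hi)).const_mul _]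
  refine Finset.sum_congr rfl fun i hi => ?_
  rw [integral_const_mul, integral_Ioi_one_inv_pow (hn i hi), mul_one_div]

lemma deriv_inv_pow (n : ℕ) {r : ℝ} (hr : r ≠ 0) :
    deriv (fun t : ℝ => (t ^ n)⁻¹) r = -n / r ^ (n + 1) := by
  cases n with
  | zero => simp
  | succ k =>
    have h : HasDerivAt (fun t : ℝ => (t ^ (k + 1))⁻¹) _ r :=
      (hasDerivAt_pow (k + 1) r).inv (pow_ne_zero _ hr)
    rw [h.deriv, Nat.add_sub_cancel]
    field_simp
    ring

lemma deriv_thirty_sub_div {r : ℝ} (hr : r ≠ 0) :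
    deriv (fun t : ℝ => (30 - 11 * t ^ 3) / (3 * t ^ 5)) r = 22 / (3 * r ^ 3) - 50 / r ^ 6 := by
  have h : HasDerivAt (fun t : ℝ => (30 - 11 * t ^ 3) / (3 * t ^ 5)) _ r :=
    (((hasDerivAt_pow 3 r).const_mul 11).const_sub 30).div ((hasDerivAt_pow 5 r).const_mul 3)
      (by positivity)
  rw [h.deriv]
  field_simp
  ring

lemma deriv_sq_sub_inv {r : ℝ} (hr : r ≠ 0) :
    deriv (fun t : ℝ => t ^ 2 - t⁻¹) r = 2 * r + (r ^ 2)⁻¹ := by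
  have h : HasDerivAt (fun t : ℝ => t ^ 2 - t⁻¹) _ r := (hasDerivAt_pow 2 r).sub (hasDerivAt_inv hr)
  rw [h.deriv]
  ring

lemma deriv_deriv_sq_sub_inv {r : ℝ} (hr : r ≠ 0) :
    deriv (deriv (fun t : ℝ => t ^ 2 - t⁻¹)) r = 2 - 2 / r ^ 3 := by
  have hev : deriv (fun t : ℝ => t ^ 2 - t⁻¹) =ᶠ[nhds r] fun t => 2 * t + (t ^ 2)⁻¹ := by
    filter_upwards [isOpen_ne.mem_nhds hr] with t ht using deriv_sq_sub_inv ht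
  have h : HasDerivAt (fun t : ℝ => 2 * t + (t ^ 2)⁻¹) _ r :=
    ((hasDerivAt_id r).const_mul 2).add ((hasDerivAt_pow 2 r).inv (pow_ne_zero 2 hr))
  rw [hev.deriv_eq, h.deriv]
  field_simp
  ring

lemma remainder_integrand_eq {r : ℝ} (hr : 0 < r) :
    (5 / 24 * (r ^ 2 - r⁻¹) * (deriv (fun t : ℝ => (t ^ 5)⁻¹) r) ^ 2 +
        (r ^ 2 - r⁻¹) / 8 * (deriv (fun t : ℝ => (30 - 11 * t ^ 3) / (3 * t ^ 5)) r) ^ 2 -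
        1 / 2 * (deriv (fun t : ℝ => t ^ 2 - t⁻¹) r / r -
          deriv (deriv (fun t : ℝ => t ^ 2 - t⁻¹)) r / 4) * ((30 - 11 * r ^ 3) / (3 * r ^ 5)) ^ 2 -
        5 / (4 * r ^ 3) * ((30 - 11 * r ^ 3) / (3 * r ^ 5)) * (r ^ 5)⁻¹ +
        5 / 24 * ((r ^ 5)⁻¹) ^ 2) * r ^ 2 =
      ∑ i : Fin 4, ![-121 / 36, -1925 / 36, 2365 / 6, -9725 / 24] i * (r ^ ![2, 5, 8, 11] i)⁻¹ := by
  rw [deriv_inv_pow 5 hr.ne', deriv_thirty_sub_div hr.ne', deriv_sq_sub_inv hr.ne',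
    deriv_deriv_sq_sub_inv hr.ne']
  simp only [Fin.sum_univ_four, Matrix.cons_val]
  field_simp
  ring

/-- With `n = 3`, `ℓ = r₀ = 1`, `f(r) = r² - r⁻¹`, `φ(r) = r⁻⁵` and
`ξ(r) = (30 - 11r³)/(3r⁵)`, the remainder functional
`I = ∫₁^∞ [ (5/24) f φ'² + (f/8) ξ'² - ½(f'/r - f''/4) ξ² - (5/(4r³)) ξ φ
  + (5/24) φ² ] r² dr` equals `-79/84`. -/
theorem stmt_19 :
    (∫ r in Set.Ioi (1 : ℝ),
        (5 / 24 * (r ^ 2 - r⁻¹) * (deriv (fun t : ℝ => (t ^ 5)⁻¹) r) ^ 2 +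
            (r ^ 2 - r⁻¹) / 8 *
              (deriv (fun t : ℝ => (30 - 11 * t ^ 3) / (3 * t ^ 5)) r) ^ 2 -
            1 / 2 *
              (deriv (fun t : ℝ => t ^ 2 - t⁻¹) r / r -
                deriv (deriv (fun t : ℝ => t ^ 2 - t⁻¹)) r / 4) *
              ((30 - 11 * r ^ 3) / (3 * r ^ 5)) ^ 2 -
            5 / (4 * r ^ 3) * ((30 - 11 * r ^ 3) / (3 * r ^ 5)) * (r ^ 5)⁻¹ +
            5 / 24 * ((r ^ 5)⁻¹) ^ 2) *
          r ^ 2) = -79 / 84 := by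
  rw [setIntegral_congr_fun measurableSet_Ioi fun r hr => remainder_integrand_eq (one_pos.trans hr),
    integral_Ioi_one_sum_mul_inv_pow _ _ _ (by decide)]
  simp only [Fin.sum_univ_four, Matrix.cons_val]
  norm_num
end
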